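/- Compositionality Lemma: the extension of a syntactic translation τ : Σ → Σ' between second-order signatures commutes with substitution and metasubstitution: for all appropriately typed terms, τ(t{xᵢ := tᵢ}_{i∈[n]}) = τ(t){xᵢ := τ(tᵢ)}_{i∈[n]} and τ(t{𝕞ᵢ := (x⃗ᵢ)tᵢ}_{i∈[k]}) = τ(t){𝕞ᵢ := (x⃗ᵢ)τ(tᵢ)}_{i∈[k]}. -/

import Mathlib

/-! ## Second-order syntax (de Bruijn representation)

An arity/sequence `(m₁,…,m_k) ∈ ℕ*` is a `Ctxa`.  A second-order signature is a set of
operators with such arities.  Terms in a metavariable context (given by a type `M` of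
metavariables with meta-arities `mar : M → ℕ`) and a variable context of size `n` are
generated by variables, metavariables applied to their parameters, and operators binding
variables in their arguments.  Working with de Bruijn indices gives terms up to
α-equivalence. -/

/-- A finite sequence `(m₁,…,m_k)` of natural numbers (an element of ℕ*). -/
structure Ctxa where
  len : ℕ
  ar : Fin len → ℕ

/-- A second-order signature: a set of operators with arities `(n₁,…,n_k) ∈ ℕ*`;
an operator of arity `(n₁,…,n_k)` takes `k` arguments and binds `nᵢ` variables in the
`i`-th argument. -/
structure SOSig : Type 1 where
  Op : Type
  arity : Op → Ctxa

namespace SO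

/-- Second-order terms over the signature `S`, in metavariable context `(M, mar)` and
variable context of size `n` (variables are de Bruijn indices `Fin n`, so terms are
automatically identified up to α-equivalence). -/
inductive Term (S : SOSig) (M : Type) (mar : M → ℕ) : ℕ → Type
  | var {n : ℕ} : Fin n → Term S M mar n
  | mvar {n : ℕ} (m : M) (ts : Fin (mar m) → Term S M mar n) : Term S M mar n
  | op {n : ℕ} (o : S.Op)
      (ts : ∀ i : Fin (S.arity o).len, Term S M mar (n + (S.arity o).ar i)) :
      Term S M mar n

namespace Term

variable {S : SOSig} {M M' : Type} {mar : M → ℕ} {mar' : M' → ℕ}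

/-- Cast a term along an equality of variable-context sizes. -/
def castCtx {n n' : ℕ} (h : n = n') (t : Term S M mar n) : Term S M mar n' := h ▸ t

/-- Extend a renaming to a context enlarged by `p` bound variables. -/
def extRen {n n' : ℕ} (ρ : Fin n → Fin n') (p : ℕ) : Fin (n + p) → Fin (n' + p) :=
  Fin.addCases (fun j => Fin.castAdd p (ρ j)) (fun j => Fin.natAdd n' j)

/-- Renaming of variables. -/
def rename : ∀ {n n' : ℕ}, Term S M mar n → (Fin n → Fin n') → Term S M mar n'
  | _, _, .var x, ρ => .var (ρ x)
  | _, _, .mvar m ts, ρ => .mvar m (fun j => rename (ts j) ρ)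
  | _, _, .op o ts, ρ => .op o (fun i => rename (ts i) (extRen ρ _))

/-- Weakening of a term by `p` fresh variables (added at the end of the context). -/
def weaken {n : ℕ} (p : ℕ) (t : Term S M mar n) : Term S M mar (n + p) :=
  rename t (Fin.castAdd p)

/-- Extend a simultaneous substitution to a context enlarged by `p` bound variables
(the bound variables are mapped to themselves). -/
def extSub {n n' : ℕ} (σ : Fin n → Term S M mar n') (p : ℕ) :
    Fin (n + p) → Term S M mar (n' + p) :=
  Fin.addCases (fun j => weaken p (σ j)) (fun j => .var (Fin.natAdd n' j))

/-- Capture-avoiding simultaneous substitution `t{xᵢ := σ(i)}` of terms for variables. -/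
def subst : ∀ {n n' : ℕ}, Term S M mar n → (Fin n → Term S M mar n') → Term S M mar n'
  | _, _, .var x, σ => σ x
  | _, _, .mvar m ts, σ => .mvar m (fun j => subst (ts j) σ)
  | _, _, .op o ts, σ => .op o (fun i => subst (ts i) (extSub σ _))

/-- The renaming inserting `p` fresh variables in the middle of a context `n' + a`
(between the first `n'` variables and the last `a` bound ones). -/
def midWeak (n' p a : ℕ) : Fin (n' + a) → Fin (n' + p + a) :=
  Fin.addCases (fun j => Fin.castAdd a (Fin.castAdd p j)) (fun j => Fin.natAdd (n' + p) j)

/-- Metasubstitution `t{𝕞 := (x⃗_𝕞)s(𝕞)}` (simultaneously renaming the variables of `t`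
along `ρ`): each metavariable `𝕞` of meta-arity `mar 𝕞` is replaced by the term
`s 𝕞`, which lives in the target context extended by `mar 𝕞` abstracted variables;
the parameters of `𝕞` are substituted for those abstracted variables. -/
def msubst : ∀ {n n' : ℕ}, Term S M mar n → (Fin n → Fin n') →
    (∀ m : M, Term S M' mar' (n' + mar m)) → Term S M' mar' n'
  | _, _, .var x, ρ, _ => .var (ρ x)
  | _, _, .mvar m ts, ρ, s =>
      subst (s m) (Fin.addCases (fun j => .var j) (fun j => msubst (ts j) ρ s))
  | _, _, .op o ts, ρ, s =>
      .op o (fun i => msubst (ts i) (extRen ρ _) (fun m => rename (s m) (midWeak _ _ _)))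

end Term

end SO
namespace SO

/-- A syntactic translation between second-order signatures: each operator
`ω : (m₁,…,m_k)` of `S` is assigned a term `𝕞₁:[m₁],…,𝕞_k:[m_k] ▹ ∅ ⊢ τ_ω` over `S'`
(empty variable context; the metavariable context is determined by the arity). -/
def Translation (S S' : SOSig) : Type :=
  ∀ o : S.Op, Term S' (Fin (S.arity o).len) (S.arity o).ar 0

/-- The extension of a syntactic translation to all terms: `τ(x) = x`,
`τ(𝕞[t₁,…,t_m]) = 𝕞[τ(t₁),…,τ(t_m)]`, and
`τ(ω((x⃗₁)t₁,…,(x⃗_k)t_k)) = τ_ω{𝕞ᵢ := (x⃗ᵢ)τ(tᵢ)}`. -/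
def Translation.ext {S S' : SOSig} (τ : Translation S S') {M : Type} {mar : M → ℕ} :
    ∀ {n : ℕ}, Term S M mar n → Term S' M mar n
  | _, .var x => .var x
  | _, .mvar m ts => .mvar m (fun j => τ.ext (ts j))
  | _, .op o ts => Term.msubst (τ o) Fin.elim0 (fun i => τ.ext (ts i))

end SO

/-! Metasubstitution along a renaming is closed under composition only once the renaming is
generalized to a substitution: `bind t σ s` substitutes terms `σ` for variables and
abstractions `s` for metavariables at once, and `msubst t ρ s = bind t (var ∘ ρ) s`.
For `bind` the substitution calculus (`bind_subst`, `subst_bind`, `bind_bind`) holds by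
structural induction. Since `τ.ext` of an operator application is a `bind` into `τ ω`, the
two laws for `τ.ext` then follow by induction on the term, the operator case being an
instance of `subst_bind` and of `bind_bind` respectively. -/

namespace SO

namespace Term

variable {S : SOSig} {M M' M'' : Type} {mar : M → ℕ} {mar' : M' → ℕ} {mar'' : M'' → ℕ}

@[simp] theorem extRen_castAdd {n n' : ℕ} (ρ : Fin n → Fin n') (p : ℕ) (j : Fin n) :
    extRen ρ p (Fin.castAdd p j) = Fin.castAdd p (ρ j) := by
  simp [extRen]

@[simp] theorem extRen_natAdd {n n' : ℕ} (ρ : Fin n → Fin n') (p : ℕ) (j : Fin p) :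
    extRen ρ p (Fin.natAdd n j) = Fin.natAdd n' j := by
  simp [extRen]

@[simp] theorem extSub_castAdd {n n' : ℕ} (σ : Fin n → Term S M mar n') (p : ℕ) (j : Fin n) :
    extSub σ p (Fin.castAdd p j) = weaken p (σ j) := by
  simp [extSub]

@[simp] theorem extSub_natAdd {n n' : ℕ} (σ : Fin n → Term S M mar n') (p : ℕ) (j : Fin p) :
    extSub σ p (Fin.natAdd n j) = .var (Fin.natAdd n' j) := by
  simp [extSub]

theorem midWeak_eq (n' p a : ℕ) : midWeak n' p a = extRen (Fin.castAdd p) a := by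
  funext x
  induction x using Fin.addCases <;> simp [midWeak]

theorem extRen_extRen {n₁ n₂ n₃ : ℕ} (ρ₁ : Fin n₁ → Fin n₂) (ρ₂ : Fin n₂ → Fin n₃) (p : ℕ)
    (x : Fin (n₁ + p)) : extRen ρ₂ p (extRen ρ₁ p x) = extRen (fun y => ρ₂ (ρ₁ y)) p x := by
  induction x using Fin.addCases <;> simp

@[simp] theorem extSub_var {n p : ℕ} :
    extSub (fun x => (.var x : Term S M mar n)) p = fun x => .var x := by
  funext x
  induction x using Fin.addCases <;> simp [weaken, rename]

theorem extSub_var_comp {n n' : ℕ} (ρ : Fin n → Fin n') (p : ℕ) :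
    extSub (fun x => (.var (ρ x) : Term S M mar n')) p = fun x => .var (extRen ρ p x) := by
  funext x
  induction x using Fin.addCases <;> simp [weaken, rename]

theorem extSub_extRen {n₁ n₂ n₃ : ℕ} (ρ : Fin n₁ → Fin n₂) (σ : Fin n₂ → Term S M mar n₃)
    (p : ℕ) (x : Fin (n₁ + p)) : extSub σ p (extRen ρ p x) = extSub (fun y => σ (ρ y)) p x := by
  induction x using Fin.addCases <;> simp

theorem rename_rename {n₁ n₂ n₃ : ℕ} (t : Term S M mar n₁) (ρ₁ : Fin n₁ → Fin n₂)
    (ρ₂ : Fin n₂ → Fin n₃) : rename (rename t ρ₁) ρ₂ = rename t (fun x => ρ₂ (ρ₁ x)) := by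
  induction t generalizing n₂ n₃ with
  | var x => rfl
  | mvar m ts ih => simp only [rename, ih]
  | op o ts ih => simp only [rename, ih, extRen_extRen]

theorem subst_rename {n₁ n₂ n₃ : ℕ} (t : Term S M mar n₁) (ρ : Fin n₁ → Fin n₂)
    (σ : Fin n₂ → Term S M mar n₃) : subst (rename t ρ) σ = subst t (fun x => σ (ρ x)) := by
  induction t generalizing n₂ n₃ with
  | var x => rfl
  | mvar m ts ih => simp only [rename, subst, ih]
  | op o ts ih => simp only [rename, subst, ih, extSub_extRen]

theorem rename_extSub {n₁ n₂ n₃ : ℕ} (σ : Fin n₁ → Term S M mar n₂) (ρ : Fin n₂ → Fin n₃)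
    (p : ℕ) (x : Fin (n₁ + p)) :
    rename (extSub σ p x) (extRen ρ p) = extSub (fun y => rename (σ y) ρ) p x := by
  induction x using Fin.addCases <;> simp [weaken, rename, rename_rename]

theorem rename_subst {n₁ n₂ n₃ : ℕ} (t : Term S M mar n₁) (σ : Fin n₁ → Term S M mar n₂)
    (ρ : Fin n₂ → Fin n₃) : rename (subst t σ) ρ = subst t (fun x => rename (σ x) ρ) := by
  induction t generalizing n₂ n₃ with
  | var x => rfl
  | mvar m ts ih => simp only [rename, subst, ih]
  | op o ts ih => simp only [rename, subst, ih, rename_extSub]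

theorem subst_extSub {n₁ n₂ n₃ : ℕ} (σ₁ : Fin n₁ → Term S M mar n₂)
    (σ₂ : Fin n₂ → Term S M mar n₃) (p : ℕ) (x : Fin (n₁ + p)) :
    subst (extSub σ₁ p x) (extSub σ₂ p) = extSub (fun y => subst (σ₁ y) σ₂) p x := by
  induction x using Fin.addCases <;> simp [weaken, subst, subst_rename, rename_subst]

@[simp] theorem subst_var {n : ℕ} (t : Term S M mar n) : subst t (fun x => .var x) = t := by
  induction t with
  | var x => rfl
  | mvar m ts ih => simp only [subst, ih]
  | op o ts ih => simp only [subst, extSub_var, ih]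

theorem subst_subst {n₁ n₂ n₃ : ℕ} (t : Term S M mar n₁) (σ₁ : Fin n₁ → Term S M mar n₂)
    (σ₂ : Fin n₂ → Term S M mar n₃) :
    subst (subst t σ₁) σ₂ = subst t (fun x => subst (σ₁ x) σ₂) := by
  induction t generalizing n₂ n₃ with
  | var x => rfl
  | mvar m ts ih => simp only [subst, ih]
  | op o ts ih => simp only [subst, ih, subst_extSub]

def bind : ∀ {n n' : ℕ}, Term S M mar n → (Fin n → Term S M' mar' n') →
    (∀ m : M, Term S M' mar' (n' + mar m)) → Term S M' mar' n'
  | _, _, .var x, σ, _ => σ x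
  | _, _, .mvar m ts, σ, s =>
      subst (s m) (Fin.addCases (fun j => .var j) (fun j => bind (ts j) σ s))
  | _, _, .op o ts, σ, s =>
      .op o (fun i =>
        bind (ts i) (extSub σ _) (fun m => rename (s m) (extRen (Fin.castAdd _) _)))

theorem msubst_eq_bind {n n' : ℕ} (t : Term S M mar n) (ρ : Fin n → Fin n')
    (s : ∀ m : M, Term S M' mar' (n' + mar m)) :
    msubst t ρ s = bind t (fun x => .var (ρ x)) s := by
  induction t generalizing n' with
  | var x => rfl
  | mvar m ts ih => simp only [msubst, bind, ih]
  | op o ts ih => simp only [msubst, bind, ih, extSub_var_comp, midWeak_eq]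

theorem bind_rename {n₁ n₂ n₃ : ℕ} (t : Term S M mar n₁) (ρ : Fin n₁ → Fin n₂)
    (σ : Fin n₂ → Term S M' mar' n₃) (s : ∀ m : M, Term S M' mar' (n₃ + mar m)) :
    bind (rename t ρ) σ s = bind t (fun x => σ (ρ x)) s := by
  induction t generalizing n₂ n₃ with
  | var x => rfl
  | mvar m ts ih => simp only [rename, bind, ih]
  | op o ts ih => simp only [rename, bind, ih, extSub_extRen]

theorem rename_bind {n₁ n₂ n₃ : ℕ} (t : Term S M mar n₁) (σ : Fin n₁ → Term S M' mar' n₂)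
    (s : ∀ m : M, Term S M' mar' (n₂ + mar m)) (ρ : Fin n₂ → Fin n₃) :
    rename (bind t σ s) ρ =
      bind t (fun x => rename (σ x) ρ) (fun m => rename (s m) (extRen ρ (mar m))) := by
  induction t generalizing n₂ n₃ with
  | var x => rfl
  | mvar m ts ih =>
    simp only [bind, rename_subst, subst_rename]
    congr 1
    funext x
    induction x using Fin.addCases <;> simp [rename, ih]
  | op o ts ih => simp [rename, bind, ih, rename_extSub, rename_rename, extRen_extRen]

theorem bind_extSub {n₁ n₂ n₃ : ℕ} (σ₁ : Fin n₁ → Term S M mar n₂)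
    (σ₂ : Fin n₂ → Term S M' mar' n₃) (s : ∀ m : M, Term S M' mar' (n₃ + mar m)) (p : ℕ)
    (x : Fin (n₁ + p)) :
    bind (extSub σ₁ p x) (extSub σ₂ p) (fun m => rename (s m) (extRen (Fin.castAdd _) _)) =
      extSub (fun y => bind (σ₁ y) σ₂ s) p x := by
  induction x using Fin.addCases <;> simp [weaken, bind, bind_rename, rename_bind]

theorem bind_subst {n₁ n₂ n₃ : ℕ} (t : Term S M mar n₁) (θ : Fin n₁ → Term S M mar n₂)
    (σ : Fin n₂ → Term S M' mar' n₃) (s : ∀ m : M, Term S M' mar' (n₃ + mar m)) :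
    bind (subst t θ) σ s = bind t (fun x => bind (θ x) σ s) s := by
  induction t generalizing n₂ n₃ with
  | var x => rfl
  | mvar m ts ih => simp only [subst, bind, ih]
  | op o ts ih => simp only [subst, bind, ih, bind_extSub]

theorem subst_bind {n₁ n₂ n₃ : ℕ} (t : Term S M mar n₁) (σ : Fin n₁ → Term S M' mar' n₂)
    (s : ∀ m : M, Term S M' mar' (n₂ + mar m)) (θ : Fin n₂ → Term S M' mar' n₃) :
    subst (bind t σ s) θ =
      bind t (fun x => subst (σ x) θ) (fun m => subst (s m) (extSub θ (mar m))) := by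
  induction t generalizing n₂ n₃ with
  | var x => rfl
  | mvar m ts ih =>
    simp only [bind, subst_subst]
    congr 1
    funext x
    induction x using Fin.addCases <;> simp [weaken, subst, subst_rename, ih]
  | op o ts ih =>
    simp [subst, bind, ih, subst_extSub, subst_rename, rename_subst, extSub_extRen,
      rename_extSub, weaken]

theorem bind_bind {n₁ n₂ n₃ : ℕ} (t : Term S M mar n₁) (σ : Fin n₁ → Term S M' mar' n₂)
    (f : ∀ m : M, Term S M' mar' (n₂ + mar m)) (σ' : Fin n₂ → Term S M'' mar'' n₃)
    (s : ∀ m : M', Term S M'' mar'' (n₃ + mar' m)) :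
    bind (bind t σ f) σ' s =
      bind t (fun x => bind (σ x) σ' s)
        (fun m => bind (f m) (extSub σ' (mar m))
          (fun m' => rename (s m') (extRen (Fin.castAdd _) _))) := by
  induction t generalizing n₂ n₃ with
  | var x => rfl
  | mvar m ts ih =>
    simp only [bind, bind_subst, subst_bind]
    congr 1
    · funext x
      induction x using Fin.addCases <;> simp [weaken, bind, subst, subst_rename, ih]
    · funext m'
      simp [subst_rename, extSub_extRen]
  | op o ts ih =>
    simp [bind, ih, bind_extSub, bind_rename, rename_bind, extSub_extRen, rename_extSub,
      rename_rename, extRen_extRen, weaken]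

end Term

end SO

namespace SO.Translation

open Term

variable {S S' : SOSig} (τ : Translation S S') {M M' : Type} {mar : M → ℕ} {mar' : M' → ℕ}

theorem ext_rename {n n' : ℕ} (t : Term S M mar n) (ρ : Fin n → Fin n') :
    τ.ext (rename t ρ) = rename (τ.ext t) ρ := by
  induction t generalizing n' with
  | var x => rfl
  | mvar m ts ih => simp only [rename, ext, ih]
  | op o ts ih =>
    simp only [rename, ext, msubst_eq_bind, rename_bind, ih]
    congr 1
    exact Subsingleton.elim _ _

theorem ext_extSub {n n' : ℕ} (σ : Fin n → Term S M mar n') (p : ℕ) (x : Fin (n + p)) :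
    τ.ext (extSub σ p x) = extSub (fun y => τ.ext (σ y)) p x := by
  induction x using Fin.addCases <;> simp [weaken, ext, ext_rename]

theorem ext_subst {n n' : ℕ} (t : Term S M mar n) (σ : Fin n → Term S M mar n') :
    τ.ext (subst t σ) = subst (τ.ext t) (fun x => τ.ext (σ x)) := by
  induction t generalizing n' with
  | var x => rfl
  | mvar m ts ih => simp only [subst, ext, ih]
  | op o ts ih =>
    simp only [subst, ext, msubst_eq_bind, subst_bind, ih, ext_extSub]
    congr 1
    exact Subsingleton.elim _ _

theorem ext_bind {n n' : ℕ} (t : Term S M mar n) (σ : Fin n → Term S M' mar' n')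
    (s : ∀ m : M, Term S M' mar' (n' + mar m)) :
    τ.ext (Term.bind t σ s) =
      Term.bind (τ.ext t) (fun x => τ.ext (σ x)) (fun m => τ.ext (s m)) := by
  induction t generalizing n' with
  | var x => rfl
  | mvar m ts ih =>
    simp only [Term.bind, ext, ext_subst]
    congr 1
    funext x
    induction x using Fin.addCases <;> simp [ext, ih]
  | op o ts ih =>
    simp only [Term.bind, ext, msubst_eq_bind, bind_bind, ih, ext_extSub, ext_rename]
    congr 1
    exact Subsingleton.elim _ _

theorem ext_msubst {n n' : ℕ} (t : Term S M mar n) (ρ : Fin n → Fin n')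
    (s : ∀ m : M, Term S M' mar' (n' + mar m)) :
    τ.ext (msubst t ρ s) = msubst (τ.ext t) ρ (fun m => τ.ext (s m)) := by
  simp only [msubst_eq_bind, ext_bind]
  rfl

end SO.Translation

open SO SO.Term

/-- **Compositionality Lemma.**
The extension of a syntactic translation `τ : Σ → Σ'` between second-order signatures
commutes with substitution and with metasubstitution: for all appropriately typed
terms, `τ(t{xᵢ := σ(i)}) = τ(t){xᵢ := τ(σ(i))}` and
`τ(t{𝕞 := (x⃗_𝕞)s(𝕞)}) = τ(t){𝕞 := (x⃗_𝕞)τ(s(𝕞))}`. -/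
theorem translation_compositionality {S S' : SOSig} (τ : Translation S S') :
    (∀ {M : Type} {mar : M → ℕ} {n n' : ℕ}
       (t : Term S M mar n) (σ : Fin n → Term S M mar n'),
       τ.ext (subst t σ) = subst (τ.ext t) (fun x => τ.ext (σ x))) ∧
    (∀ {M M' : Type} {mar : M → ℕ} {mar' : M' → ℕ} {n : ℕ}
       (t : Term S M mar n) (s : ∀ m : M, Term S M' mar' (n + mar m)),
       τ.ext (msubst t id s) = msubst (τ.ext t) id (fun m => τ.ext (s m))) :=
  ⟨τ.ext_subst, fun t s => τ.ext_msubst t id s⟩
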